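/- Let V be a finite-dimensional real inner product space, R ⊂ V an irreducible reduced root system spanning V, and let a ∈ V be a nonzero dominant minuscule coweight of R. Set R⁺_a = {α ∈ R : (α, a) = 1} and N = |R⁺_a|. Then the sum of the roots in R⁺_a equals (N / (a, a)) · a; in particular this sum is a positive multiple of a. -/

import Mathlib

open scoped RealInnerProductSpace

variable {V : Type*} [NormedAddCommGroup V] [InnerProductSpace ℝ V] [FiniteDimensional ℝ V]

/-- The orthogonal reflection in the hyperplane orthogonal to `α`. -/
noncomputable def rootReflection (α : V) : V → V :=
  fun v => v - (2 * ⟪v, α⟫ / ⟪α, α⟫) • α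

/-- `R` is a reduced root system in `V`. -/
def IsReducedRootSystem (R : Set V) : Prop :=
  R.Finite ∧ (0 : V) ∉ R ∧
    (∀ α ∈ R, ∀ t : ℝ, t • α ∈ R → t = 1 ∨ t = -1) ∧
    (∀ α ∈ R, ∀ β ∈ R, rootReflection α β ∈ R) ∧
    (∀ α ∈ R, ∀ β ∈ R, ∃ m : ℤ, 2 * ⟪β, α⟫ / ⟪α, α⟫ = (m : ℝ))

/-- The Weyl group of `R`: the subgroup of the orthogonal group of `V` generated by the
reflections in the roots of `R`. -/
noncomputable def weylGroup (R : Set V) : Subgroup (V ≃ₗᵢ[ℝ] V) :=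
  Subgroup.closure {w | ∃ α ∈ R, ∀ v : V, w v = rootReflection α v}

/-- Two vectors lie in the same irreducible component of `R`: the equivalence relation
generated by non-orthogonality of roots. -/
def SameComponent (R : Set V) : V → V → Prop :=
  Relation.EqvGen fun x y => x ∈ R ∧ y ∈ R ∧ ⟪x, y⟫ ≠ 0

/-- `a` is minuscule: for every irreducible component `Rᵢ` of `R`, the set of inner
products `{(α, a) : α ∈ Rᵢ}` has at most `3` elements. -/
def IsMinuscule (R : Set V) (a : V) : Prop :=
  ∀ α ∈ R, ({t : ℝ | ∃ β ∈ R, SameComponent R α β ∧ ⟪β, a⟫ = t}).ncard ≤ 3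

/-- `Δ` is a base of the root system `R`: a linearly independent subset of `R` such that
every root is a linear combination of elements of `Δ` with integer coefficients, all of
the same sign. -/
def IsBase (R Δ : Set V) : Prop :=
  Δ ⊆ R ∧ LinearIndependent ℝ ((↑) : Δ → V) ∧
    ∀ α ∈ R, ∃ c : V →₀ ℤ, (c.support : Set V) ⊆ Δ ∧
      ((∀ β, 0 ≤ c β) ∨ (∀ β, c β ≤ 0)) ∧ α = c.sum fun β m => (m : ℝ) • β

/-! If `T x = ∑_{α ∈ R} (α, x) α`, then `T` is a symmetric operator commuting with every
reflection in a root, so each eigenspace of `T` is reflection-stable; for an irreducible `R` such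
a subspace is `0` or `V`, hence `T = μ • id`. For a minuscule `a` the roots with `(α, a) ≠ 0` are
the `N` roots of `R⁺_a` and their negatives, so `T a = 2 ∑_{α ∈ R⁺_a} α`; pairing with `a` gives
`μ (a, a) = 2N`. -/

section

variable {E : Type*} [NormedAddCommGroup E] [InnerProductSpace ℝ E]

theorem rootReflection_rootReflection {γ : E} (hγ : γ ≠ 0) (x : E) :
    rootReflection γ (rootReflection γ x) = x := by
  have hγγ : ⟪γ, γ⟫ ≠ 0 := inner_self_ne_zero.mpr hγ
  simp only [rootReflection, inner_sub_left, real_inner_smul_left]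
  match_scalars
  · ring
  · field_simp
    ring

theorem rootReflection_self {γ : E} (hγ : γ ≠ 0) : rootReflection γ γ = -γ := by
  have hγγ : ⟪γ, γ⟫ ≠ 0 := inner_self_ne_zero.mpr hγ
  rw [rootReflection, mul_div_assoc, div_self hγγ]
  module

theorem IsReducedRootSystem.neg_mem {R : Set E} (hR : IsReducedRootSystem R) {α : E}
    (hα : α ∈ R) : -α ∈ R := by
  have hα0 : α ≠ 0 := fun h => hR.2.1 (h ▸ hα)
  simpa only [rootReflection_self hα0] using hR.2.2.2.1 α hα α hα

noncomputable def rootReflectionₗ (γ : E) : E →ₗ[ℝ] E where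
  toFun := rootReflection γ
  map_add' x y := by
    simp only [rootReflection, inner_add_left]
    match_scalars <;> ring
  map_smul' c x := by
    simp only [rootReflection, real_inner_smul_left, RingHom.id_apply]
    match_scalars <;> ring

@[simp]
theorem rootReflectionₗ_apply (γ x : E) : rootReflectionₗ γ x = rootReflection γ x := rfl

theorem isSymmetric_rootReflectionₗ (γ : E) : (rootReflectionₗ γ).IsSymmetric := by
  intro x y
  simp only [rootReflectionₗ_apply, rootReflection, inner_sub_left, inner_sub_right,
    real_inner_smul_left, real_inner_smul_right, real_inner_comm γ y]
  ring

noncomputable def sumInnerSmul (F : Finset E) : E →ₗ[ℝ] E where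
  toFun x := ∑ α ∈ F, ⟪α, x⟫ • α
  map_add' x y := by simp only [inner_add_right, add_smul, Finset.sum_add_distrib]
  map_smul' c x := by
    simp only [real_inner_smul_right, smul_smul, Finset.smul_sum, RingHom.id_apply]

theorem sumInnerSmul_apply (F : Finset E) (x : E) : sumInnerSmul F x = ∑ α ∈ F, ⟪α, x⟫ • α :=
  rfl

theorem isSymmetric_sumInnerSmul (F : Finset E) : (sumInnerSmul F).IsSymmetric := by
  intro x y
  simp only [sumInnerSmul_apply, sum_inner, inner_sum, real_inner_smul_left,
    real_inner_smul_right, real_inner_comm x]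
  exact Finset.sum_congr rfl fun α _ => mul_comm _ _

theorem sumInnerSmul_map_of_involutive {F : Finset E} {g : E →ₗ[ℝ] E} (hg : g.IsSymmetric)
    (hinv : ∀ x, g (g x) = x) (hF : ∀ α ∈ F, g α ∈ F) (x : E) :
    sumInnerSmul F (g x) = g (sumInnerSmul F x) :=
  calc sumInnerSmul F (g x) = ∑ α ∈ F, ⟪g α, x⟫ • α :=
        Finset.sum_congr rfl fun α _ => by rw [hg]
    _ = ∑ α ∈ F, ⟪α, x⟫ • g α :=
        Finset.sum_nbij' g g hF hF (fun α _ => hinv α) (fun α _ => hinv α)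
          (fun α _ => by rw [hinv])
    _ = g (sumInnerSmul F x) := by simp only [sumInnerSmul_apply, map_sum, map_smul]

theorem mem_or_mem_orthogonal_of_rootReflection_mem {γ : E} (hγ : γ ≠ 0) {K : Submodule ℝ E}
    (hK : ∀ x ∈ K, rootReflection γ x ∈ K) : γ ∈ K ∨ γ ∈ Kᗮ := by
  refine or_iff_not_imp_right.mpr fun hγK => ?_
  obtain ⟨x, hx, hxγ⟩ : ∃ x ∈ K, ⟪x, γ⟫ ≠ 0 := by
    simpa only [Submodule.mem_orthogonal, not_forall, exists_prop] using hγK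
  have hc : 2 * ⟪x, γ⟫ / ⟪γ, γ⟫ ≠ 0 :=
    div_ne_zero (mul_ne_zero two_ne_zero hxγ) (inner_self_ne_zero.mpr hγ)
  have hsub : (2 * ⟪x, γ⟫ / ⟪γ, γ⟫) • γ ∈ K := by
    simpa only [rootReflection, sub_sub_cancel] using K.sub_mem hx (hK x hx)
  exact (K.smul_mem_iff hc).mp hsub

theorem SameComponent.mem_iff_mem {R : Set E} {K : Submodule ℝ E}
    (hR : ∀ γ ∈ R, γ ∈ K ∨ γ ∈ Kᗮ) {α β : E} (h : SameComponent R α β) : α ∈ K ↔ β ∈ K := by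
  induction h with
  | rel x y hxy =>
    obtain ⟨hx, hy, hxy⟩ := hxy
    refine ⟨fun hxK => (hR y hy).resolve_right fun hyK => hxy ?_,
      fun hyK => (hR x hx).resolve_right fun hxK => hxy ?_⟩
    · exact Submodule.inner_right_of_mem_orthogonal hxK hyK
    · exact Submodule.inner_left_of_mem_orthogonal hyK hxK
  | refl x => exact Iff.rfl
  | symm x y _ ih => exact ih.symm
  | trans x y z _ _ ih₁ ih₂ => exact ih₁.trans ih₂

theorem Submodule.eq_bot_or_eq_top_of_rootReflection_mem {R : Set E} (h0 : (0 : E) ∉ R)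
    (hspan : Submodule.span ℝ R = ⊤) (hirr : ∀ α ∈ R, ∀ β ∈ R, SameComponent R α β)
    {K : Submodule ℝ E} (hK : ∀ γ ∈ R, ∀ x ∈ K, rootReflection γ x ∈ K) : K = ⊥ ∨ K = ⊤ := by
  have hdich : ∀ γ ∈ R, γ ∈ K ∨ γ ∈ Kᗮ := fun γ hγ =>
    mem_or_mem_orthogonal_of_rootReflection_mem (fun h => h0 (h ▸ hγ)) (hK γ hγ)
  by_cases hRK : ∃ α ∈ R, α ∈ K
  · obtain ⟨α, hα, hαK⟩ := hRK
    have hle : Submodule.span ℝ R ≤ K :=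
      Submodule.span_le.mpr fun γ hγ => ((hirr α hα γ hγ).mem_iff_mem hdich).mp hαK
    exact Or.inr (top_unique (hspan ▸ hle))
  · push Not at hRK
    have hle : Submodule.span ℝ R ≤ Kᗮ :=
      Submodule.span_le.mpr fun γ hγ => (hdich γ hγ).resolve_left (hRK γ hγ)
    exact Or.inl ((Submodule.orthogonal_eq_top_iff K).mp (top_unique (hspan ▸ hle)))

theorem exists_sumInnerSmul_eq_smul [FiniteDimensional ℝ E] {R : Set E} (hfin : R.Finite)
    (h0 : (0 : E) ∉ R) (hrefl : ∀ α ∈ R, ∀ β ∈ R, rootReflection α β ∈ R)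
    (hspan : Submodule.span ℝ R = ⊤) (hirr : ∀ α ∈ R, ∀ β ∈ R, SameComponent R α β) :
    ∃ μ : ℝ, ∀ x, sumInnerSmul hfin.toFinset x = μ • x := by
  rcases subsingleton_or_nontrivial E with hE | hE
  · exact ⟨0, fun x => Subsingleton.elim _ _⟩
  set T := sumInnerSmul hfin.toFinset
  obtain ⟨μ, hμ⟩ : ∃ μ, Module.End.HasEigenvalue T μ :=
    ⟨_, (isSymmetric_sumInnerSmul _).hasEigenvalue_iSup_of_finiteDimensional⟩
  set K := Module.End.eigenspace T μ
  have hstable : ∀ γ ∈ R, ∀ x ∈ K, rootReflection γ x ∈ K := by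
    intro γ hγ x hx
    rw [Module.End.mem_eigenspace_iff] at hx ⊢
    have hγ0 : γ ≠ 0 := fun h => h0 (h ▸ hγ)
    have hcomm := sumInnerSmul_map_of_involutive (isSymmetric_rootReflectionₗ γ)
      (rootReflection_rootReflection hγ0) (F := hfin.toFinset)
      (fun α hα => hfin.mem_toFinset.mpr (hrefl γ hγ α (hfin.mem_toFinset.mp hα))) x
    simp only [rootReflectionₗ_apply] at hcomm
    rw [hcomm, hx, ← rootReflectionₗ_apply, map_smul, rootReflectionₗ_apply]
  have htop : K = ⊤ := (Submodule.eq_bot_or_eq_top_of_rootReflection_mem h0 hspan hirr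
    hstable).resolve_left (Module.End.hasEigenvalue_iff.mp hμ)
  exact ⟨μ, fun x => Module.End.mem_eigenspace_iff.mp (show x ∈ K from htop ▸ Submodule.mem_top)⟩

theorem sumInnerSmul_eq_two_smul_sum_filter {F : Finset E} (hneg : ∀ α ∈ F, -α ∈ F) {a : E}
    (hmin : ∀ α ∈ F, ⟪α, a⟫ = 0 ∨ ⟪α, a⟫ = 1 ∨ ⟪α, a⟫ = -1) :
    sumInnerSmul F a = (2 : ℝ) • ∑ α ∈ F with ⟪α, a⟫ = 1, α := by
  set g : E → E := fun α => if ⟪α, a⟫ = 1 then α else 0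
  have hsplit : ∀ α ∈ F, ⟪α, a⟫ • α = g α + g (-α) := by
    intro α hα
    rcases hmin α hα with h | h | h <;> norm_num [g, inner_neg_left, h]
  have hreindex : ∑ α ∈ F, g (-α) = ∑ α ∈ F, g α :=
    Finset.sum_nbij' Neg.neg Neg.neg hneg hneg (fun α _ => neg_neg α) (fun α _ => neg_neg α)
      fun _ _ => rfl
  rw [sumInnerSmul_apply, Finset.sum_congr rfl hsplit, Finset.sum_add_distrib, hreindex,
    Finset.sum_filter, two_smul]

theorem inner_sum_filter_inner_eq_one (F : Finset E) (a : E) :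
    ⟪∑ α ∈ F with ⟪α, a⟫ = 1, α, a⟫ = (F.filter fun α => ⟪α, a⟫ = 1).card := by
  rw [sum_inner, Finset.sum_congr rfl fun α hα => (Finset.mem_filter.mp hα).2, Finset.sum_const,
    nsmul_one]

theorem exists_mem_inner_ne_zero {R : Set E} (hspan : Submodule.span ℝ R = ⊤) {a : E}
    (ha : a ≠ 0) : ∃ α ∈ R, ⟪α, a⟫ ≠ 0 := by
  by_contra! h
  have hle : Submodule.span ℝ R ≤ (ℝ ∙ a)ᗮ :=
    Submodule.span_le.mpr fun α hα => Submodule.mem_orthogonal_singleton_iff_inner_left.mpr (h α hα)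
  have haa : ⟪a, a⟫ = 0 := Submodule.inner_right_of_mem_orthogonal
    (Submodule.mem_span_singleton_self a) (hle (hspan ▸ Submodule.mem_top))
  exact ha (inner_self_eq_zero.mp haa)

end

open scoped Classical in
theorem sum_of_roots_pairing_one_general
    (R : Set V) (hR : IsReducedRootSystem R)
    (hspan : Submodule.span ℝ R = ⊤)
    (hirr : ∀ α ∈ R, ∀ β ∈ R, SameComponent R α β)
    (a : V) (ha0 : a ≠ 0)
    (hmin : ∀ α ∈ R, ⟪α, a⟫ = 0 ∨ ⟪α, a⟫ = 1 ∨ ⟪α, a⟫ = -1) :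
    (∑ α ∈ hR.1.toFinset.filter (fun α => ⟪α, a⟫ = 1), α) =
        (((hR.1.toFinset.filter (fun α => ⟪α, a⟫ = 1)).card : ℝ) / ⟪a, a⟫) • a ∧
      0 < ((hR.1.toFinset.filter (fun α => ⟪α, a⟫ = 1)).card : ℝ) / ⟪a, a⟫ := by
  set P := hR.1.toFinset.filter fun α => ⟪α, a⟫ = 1
  obtain ⟨μ, hμ⟩ := exists_sumInnerSmul_eq_smul hR.1 hR.2.1 hR.2.2.2.1 hspan hirr
  have hTa : μ • a = (2 : ℝ) • ∑ α ∈ P, α := (hμ a).symm.trans <|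
    sumInnerSmul_eq_two_smul_sum_filter
      (fun α hα => hR.1.mem_toFinset.mpr (hR.neg_mem (hR.1.mem_toFinset.mp hα)))
      fun α hα => hmin α (hR.1.mem_toFinset.mp hα)
  have hsum : ∑ α ∈ P, α = (μ / 2) • a := by
    rw [div_eq_inv_mul, ← smul_smul, hTa, smul_smul, inv_mul_cancel₀ two_ne_zero, one_smul]
  have hcard : (P.card : ℝ) = μ / 2 * ⟪a, a⟫ := by
    rw [← inner_sum_filter_inner_eq_one, hsum, real_inner_smul_left]
  have haa : 0 < ⟪a, a⟫ := real_inner_self_pos.mpr ha0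
  have hP : P.Nonempty := by
    obtain ⟨α, hα, hαa⟩ := exists_mem_inner_ne_zero hspan ha0
    rcases hmin α hα with h | h | h
    · exact absurd h hαa
    · exact ⟨α, by simpa [P] using ⟨hα, h⟩⟩
    · exact ⟨-α, by simpa [P, inner_neg_left] using ⟨hR.neg_mem hα, by linarith⟩⟩
  refine ⟨by rw [hsum, hcard, mul_div_cancel_right₀ _ haa.ne'], div_pos ?_ haa⟩
  exact_mod_cast hP.card_pos

open scoped Classical in
theorem sum_of_roots_pairing_one
    (R : Set V) (hR : IsReducedRootSystem R)
    (hspan : Submodule.span ℝ R = ⊤)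
    (hirr : ∀ α ∈ R, ∀ β ∈ R, SameComponent R α β)
    (a : V) (ha0 : a ≠ 0)
    (Δ : Set V) (hΔ : IsBase R Δ)
    (hdom : ∀ α ∈ Δ, 0 ≤ ⟪α, a⟫)
    (hmin : ∀ α ∈ R, ⟪α, a⟫ = 0 ∨ ⟪α, a⟫ = 1 ∨ ⟪α, a⟫ = -1) :
    (∑ α ∈ hR.1.toFinset.filter (fun α => ⟪α, a⟫ = 1), α) =
        (((hR.1.toFinset.filter (fun α => ⟪α, a⟫ = 1)).card : ℝ) / ⟪a, a⟫) • a ∧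
      0 < ((hR.1.toFinset.filter (fun α => ⟪α, a⟫ = 1)).card : ℝ) / ⟪a, a⟫ :=
  sum_of_roots_pairing_one_general R hR hspan hirr a ha0 hmin
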